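/- Let q be a prime power, let F be a finite field with q² elements, and let E = {x ∈ F : x^q = x} be the fixed subfield of the field involution σ : x ↦ x^q (so E is a subfield of F with exactly q elements). Then the special unitary group SU₂(F,σ) = {g ∈ SL₂(F) : σ(g)ᵀ · g = 1} is isomorphic as an abstract group to SL₂(E). -/

import Mathlib

/-!
Pick `e` with `e ^ (q + 1) = -1` (possible because `Fˣ` is cyclic) and `t` with
`l := t - t ^ q ≠ 0`. Conjugating by `Q = !![1, t; e, e * t ^ q]` turns the hermitian form with
Gram matrix `1` into the one with Gram matrix `J = !![0, l; -l, 0]`, so `Q⁻¹ SU₂ Q` consists of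
the `m ∈ SL₂(F)` with `σ(m)ᵀ J m = J`. But every `m ∈ SL₂(F)` satisfies `mᵀ J m = J`, so this
condition just says `σ(m) = m`, i.e. `m ∈ SL₂(E)`.
-/

open Matrix in
/-- The special unitary group `SU₂(F,σ) = {g ∈ SL₂(F) : σ(g)ᵀ · g = 1}`, where the
field involution `σ` is applied entrywise. -/
def SU₂ {F : Type} [Field F] (σ : F →+* F) :
    Subgroup (SpecialLinearGroup (Fin 2) F) where
  carrier := {g | ((g : Matrix (Fin 2) (Fin 2) F).map σ)ᵀ * (g : Matrix (Fin 2) (Fin 2) F) = 1}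
  one_mem' := by
    simp [Set.mem_setOf_eq, SpecialLinearGroup.coe_one, Matrix.map_one]
  mul_mem' := by
    intro a b ha hb
    simp only [Set.mem_setOf_eq] at ha hb ⊢
    rw [Matrix.SpecialLinearGroup.coe_mul, Matrix.map_mul, Matrix.transpose_mul]
    calc ((b : Matrix (Fin 2) (Fin 2) F).map σ)ᵀ * ((a : Matrix (Fin 2) (Fin 2) F).map σ)ᵀ *
          ((a : Matrix (Fin 2) (Fin 2) F) * (b : Matrix (Fin 2) (Fin 2) F))
        = ((b : Matrix (Fin 2) (Fin 2) F).map σ)ᵀ *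
            (((a : Matrix (Fin 2) (Fin 2) F).map σ)ᵀ * (a : Matrix (Fin 2) (Fin 2) F)) *
            (b : Matrix (Fin 2) (Fin 2) F) := by noncomm_ring
      _ = 1 := by rw [ha, mul_one, hb]
  inv_mem' := by
    intro g hg
    simp only [Set.mem_setOf_eq] at hg ⊢
    have hBC : (g : Matrix (Fin 2) (Fin 2) F) * ((g⁻¹ : SpecialLinearGroup (Fin 2) F) :
        Matrix (Fin 2) (Fin 2) F) = 1 := by
      rw [← Matrix.SpecialLinearGroup.coe_mul, mul_inv_cancel, Matrix.SpecialLinearGroup.coe_one]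
    have h3 : (((g⁻¹ : SpecialLinearGroup (Fin 2) F) : Matrix (Fin 2) (Fin 2) F).map σ)ᵀ *
        ((g : Matrix (Fin 2) (Fin 2) F).map σ)ᵀ = 1 := by
      rw [← Matrix.transpose_mul, ← Matrix.map_mul, hBC,
        Matrix.map_one σ (map_zero σ) (map_one σ), Matrix.transpose_one]
    calc (((g⁻¹ : SpecialLinearGroup (Fin 2) F) : Matrix (Fin 2) (Fin 2) F).map σ)ᵀ *
          ((g⁻¹ : SpecialLinearGroup (Fin 2) F) : Matrix (Fin 2) (Fin 2) F)
        = (((g⁻¹ : SpecialLinearGroup (Fin 2) F) : Matrix (Fin 2) (Fin 2) F).map σ)ᵀ *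
            (((g : Matrix (Fin 2) (Fin 2) F).map σ)ᵀ * (g : Matrix (Fin 2) (Fin 2) F)) *
            ((g⁻¹ : SpecialLinearGroup (Fin 2) F) : Matrix (Fin 2) (Fin 2) F) := by
          rw [hg, mul_one]
      _ = ((((g⁻¹ : SpecialLinearGroup (Fin 2) F) : Matrix (Fin 2) (Fin 2) F).map σ)ᵀ *
            ((g : Matrix (Fin 2) (Fin 2) F).map σ)ᵀ) *
            ((g : Matrix (Fin 2) (Fin 2) F) *
              ((g⁻¹ : SpecialLinearGroup (Fin 2) F) : Matrix (Fin 2) (Fin 2) F)) := by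
          noncomm_ring
      _ = 1 := by rw [h3, hBC, one_mul]

/-- The fixed subfield `E = {x ∈ F : x^q = x}` of the field involution `σ : x ↦ x^q`. -/
def fixedSubfield {F : Type} [Field F] (q : ℕ) (σ : F →+* F) (hσ : ∀ x, σ x = x ^ q) :
    Subfield F where
  carrier := {x | x ^ q = x}
  mul_mem' := by
    intro a b ha hb
    simp only [Set.mem_setOf_eq] at *
    rw [mul_pow, ha, hb]
  one_mem' := one_pow q
  add_mem' := by
    intro a b ha hb
    simp only [Set.mem_setOf_eq] at *
    rw [← hσ, map_add, hσ, hσ, ha, hb]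
  zero_mem' := by
    show (0 : F) ^ q = 0
    rw [← hσ, map_zero]
  neg_mem' := by
    intro a ha
    simp only [Set.mem_setOf_eq] at *
    rw [← hσ, map_neg, hσ, ha]
  inv_mem' := by
    intro a ha
    simp only [Set.mem_setOf_eq] at *
    rw [← hσ, map_inv₀, hσ, ha]

theorem IsCyclic.mem_range_powMonoidHom_iff {G : Type*} [CommGroup G] [IsCyclic G] [Finite G]
    {a b : ℕ} (hab : a * b = Nat.card G) {y : G} :
    y ∈ (powMonoidHom a : G →* G).range ↔ y ^ b = 1 := by
  have ha : a ∣ Nat.card G := ⟨b, hab.symm⟩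
  have hb : b ∣ Nat.card G := ⟨a, by rw [← hab, mul_comm]⟩
  have hle : (powMonoidHom a : G →* G).range ≤ (powMonoidHom b : G →* G).ker := by
    rintro _ ⟨x, rfl⟩
    simp [← pow_mul, hab, pow_card_eq_one']
  have heq := Subgroup.eq_of_le_of_card_ge hle <| by
    rw [IsCyclic.card_powMonoidHom_ker, IsCyclic.card_powMonoidHom_range, Nat.gcd_eq_right ha,
      Nat.gcd_eq_right hb, ← hab,
      Nat.mul_div_cancel_left _ (Nat.pos_of_dvd_of_pos ha Nat.card_pos)]
  rw [heq, MonoidHom.mem_ker, powMonoidHom_apply]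

namespace FiniteField

variable {F : Type*} [Field F] [Fintype F] {q : ℕ}

theorem card_units_eq_of_card_eq_sq (hF : Fintype.card F = q ^ 2) :
    Nat.card Fˣ = (q + 1) * (q - 1) := by
  rw [Nat.card_units, Nat.card_eq_fintype_card, hF]
  simpa using Nat.sq_sub_sq q 1

theorem two_le_of_card_eq_sq (hF : Fintype.card F = q ^ 2) : 2 ≤ q := by
  have := hF ▸ Fintype.one_lt_card (α := F)
  by_contra! h
  interval_cases q <;> simp at this

theorem exists_pow_succ_eq (hF : Fintype.card F = q ^ 2) {y : F} (hy0 : y ≠ 0)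
    (hy : y ^ q = y) : ∃ x : F, x ^ (q + 1) = y := by
  have hq : q ≠ 0 := by have := two_le_of_card_eq_sq hF; omega
  have hy1 : y ^ (q - 1) = 1 :=
    mul_right_cancel₀ hy0 (by rw [pow_sub_one_mul hq, hy, one_mul])
  obtain ⟨x, hx⟩ := (IsCyclic.mem_range_powMonoidHom_iff (card_units_eq_of_card_eq_sq hF).symm
    (y := Units.mk0 y hy0)).mpr (Units.ext (by simpa using hy1))
  exact ⟨x, by simpa [Units.ext_iff] using hx⟩

theorem exists_pow_ne_self (hF : Fintype.card F = q ^ 2) : ∃ t : F, t ^ q ≠ t := by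
  by_contra! h
  have hq := two_le_of_card_eq_sq hF
  have hker : (powMonoidHom (q - 1) : Fˣ →* Fˣ).ker = ⊤ := by
    refine eq_top_iff.mpr fun u _ => (mul_eq_right (b := u)).mp ?_
    rw [powMonoidHom_apply, pow_sub_one_mul (by omega), Units.ext_iff, Units.val_pow_eq_pow_val, h]
  have := IsCyclic.card_powMonoidHom_ker Fˣ (q - 1)
  rw [hker, Subgroup.card_top, card_units_eq_of_card_eq_sq hF,
    Nat.gcd_eq_right (dvd_mul_left _ _)] at this
  have := Nat.eq_of_mul_eq_mul_right (m := q - 1) (by omega) (this.trans (one_mul _).symm)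
  omega

end FiniteField

namespace Matrix

variable {n R : Type*} [Fintype n] [DecidableEq n] [CommRing R]

theorem transpose_mul_skew_mul (l : R) (m : Matrix (Fin 2) (Fin 2) R) :
    mᵀ * !![0, l; -l, 0] * m = m.det • !![0, l; -l, 0] := by
  ext i j
  fin_cases i <;> fin_cases j <;> simp [mul_apply, Fin.sum_univ_two, det_fin_two] <;> ring

theorem map_transpose_mul_skew_mul_eq_iff {σ : R →+* R} {l : R} (hl : IsUnit l)
    {m : Matrix (Fin 2) (Fin 2) R} (hm : m.det = 1) :
    (m.map σ)ᵀ * !![0, l; -l, 0] * m = !![0, l; -l, 0] ↔ m.map σ = m := by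
  have hu : IsUnit (!![0, l; -l, 0] * m) := by
    rw [isUnit_iff_isUnit_det, det_mul, hm, mul_one, det_fin_two_of]
    simpa using hl.mul hl
  conv_lhs => rhs; rw [← one_smul R !![0, l; -l, 0], ← hm, ← transpose_mul_skew_mul]
  rw [mul_assoc, mul_assoc, hu.mul_left_inj, transpose_inj]

theorem map_transpose_mul_self_eq_one_iff {σ : R →+* R} {Q g m : Matrix n n R} (hQ : IsUnit Q)
    (hgm : g * Q = Q * m) :
    (g.map σ)ᵀ * g = 1 ↔ (m.map σ)ᵀ * ((Q.map σ)ᵀ * Q) * m = (Q.map σ)ᵀ * Q := by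
  have hQσ : IsUnit (Q.map σ)ᵀ := (isUnit_transpose _).mpr (hQ.map σ.mapMatrix)
  have key : (m.map σ)ᵀ * ((Q.map σ)ᵀ * Q) * m = (Q.map σ)ᵀ * ((g.map σ)ᵀ * g) * Q := by
    calc _ = ((Q * m).map σ)ᵀ * (Q * m) := by rw [Matrix.map_mul, transpose_mul]; noncomm_ring
      _ = ((g * Q).map σ)ᵀ * (g * Q) := by rw [hgm]
      _ = _ := by rw [Matrix.map_mul, transpose_mul]; noncomm_ring
  rw [key]
  calc (g.map σ)ᵀ * g = 1
        ↔ (Q.map σ)ᵀ * ((g.map σ)ᵀ * g * Q) = (Q.map σ)ᵀ * (1 * Q) := by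
        rw [hQσ.mul_right_inj, hQ.mul_left_inj]
    _ ↔ _ := by rw [one_mul, ← mul_assoc]

theorem exists_map_transpose_mul_self_eq_skew {σ : R →+* R} {e t : R} (he : σ e * e = -1)
    (ht : σ (σ t) = t) (hl : IsUnit (t - σ t)) :
    ∃ Q : (Matrix (Fin 2) (Fin 2) R)ˣ,
      ((Q : Matrix (Fin 2) (Fin 2) R).map σ)ᵀ * Q = !![0, t - σ t; -(t - σ t), 0] := by
  have hdet : IsUnit (!![1, t; e, e * σ t] : Matrix (Fin 2) (Fin 2) R).det := by
    rw [det_fin_two_of, show 1 * (e * σ t) - t * e = e * -(t - σ t) by ring]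
    exact (IsUnit.of_mul_eq_one (-σ e) (by linear_combination -he)).mul hl.neg
  refine ⟨nonsingInvUnit _ hdet, ?_⟩
  ext i j
  fin_cases i <;> fin_cases j <;> simp [nonsingInvUnit, mul_apply, Fin.sum_univ_two, ht]
  · linear_combination he
  · linear_combination σ t * he
  · linear_combination t * he
  · linear_combination t * σ t * he

namespace SpecialLinearGroup

def conjByUnit (Q : (Matrix n n R)ˣ) : SpecialLinearGroup n R ≃* SpecialLinearGroup n R where
  toFun g := ⟨Q * g * ↑Q⁻¹, by rw [det_units_conj, g.2]⟩
  invFun g := ⟨↑Q⁻¹ * g * Q, by rw [det_units_conj', g.2]⟩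
  left_inv g := Subtype.ext <| by simp [mul_assoc]
  right_inv g := Subtype.ext <| by simp [mul_assoc]
  map_mul' g h := Subtype.ext <| by
    change _ = (Q * g * (↑Q⁻¹ : Matrix n n R)) * (Q * h * (↑Q⁻¹ : Matrix n n R))
    simp [mul_assoc]

theorem mem_range_map_iff {S : Type*} [CommRing S] {f : S →+* R} (hf : Function.Injective f)
    {g : SpecialLinearGroup n R} : g ∈ (map f).range ↔ ∀ i j, g i j ∈ Set.range f := by
  refine ⟨?_, fun h => ?_⟩
  · rintro ⟨k, rfl⟩ i j
    exact ⟨k i j, rfl⟩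
  choose k hk using h
  have hmap : (of k).map f = g := Matrix.ext fun i j => hk i j
  refine ⟨⟨of k, hf ?_⟩, Subtype.ext hmap⟩
  rw [RingHom.map_det, RingHom.mapMatrix_apply, hmap, map_one]
  exact g.2

end SpecialLinearGroup

end Matrix

open Matrix

theorem SU₂_eq_range_conjByUnit_comp_map {F : Type} [Field F] {σ : F →+* F} {E : Subfield F}
    (hE : ∀ x, x ∈ E ↔ σ x = x) {Q : (Matrix (Fin 2) (Fin 2) F)ˣ} {l : F} (hl : l ≠ 0)
    (hQ : ((Q : Matrix (Fin 2) (Fin 2) F).map σ)ᵀ * Q = !![0, l; -l, 0]) :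
    SU₂ σ = ((SpecialLinearGroup.conjByUnit Q).toMonoidHom.comp
      (SpecialLinearGroup.map E.subtype)).range := by
  ext g
  rw [MonoidHom.range_comp, Subgroup.mem_map_equiv,
    SpecialLinearGroup.mem_range_map_iff E.subtype_injective]
  set m := (SpecialLinearGroup.conjByUnit Q).symm g
  have hgm : (g : Matrix (Fin 2) (Fin 2) F) * Q = Q * m := by
    change _ = (Q : Matrix (Fin 2) (Fin 2) F) * ((↑Q⁻¹ : Matrix (Fin 2) (Fin 2) F) * g * Q)
    simp [← mul_assoc]
  change _ ↔ ∀ i j, (m : Matrix (Fin 2) (Fin 2) F) i j ∈ Set.range E.subtype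
  simp only [Subfield.coe_subtype, Subtype.range_coe_subtype, hE]
  change ((g : Matrix (Fin 2) (Fin 2) F).map σ)ᵀ * g = 1 ↔ _
  rw [map_transpose_mul_self_eq_one_iff Q.isUnit hgm, hQ,
    map_transpose_mul_skew_mul_eq_iff hl.isUnit m.2]
  exact Matrix.ext_iff.symm

theorem nonempty_SU₂_mulEquiv_SL {F : Type} [Field F] {σ : F →+* F} {E : Subfield F}
    (hE : ∀ x, x ∈ E ↔ σ x = x) {e t : F} (he : σ e * e = -1) (ht : σ (σ t) = t)
    (hσt : σ t ≠ t) : Nonempty (SU₂ σ ≃* SpecialLinearGroup (Fin 2) E) := by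
  have hl : t - σ t ≠ 0 := sub_ne_zero.mpr hσt.symm
  obtain ⟨Q, hQ⟩ := exists_map_transpose_mul_self_eq_skew he ht hl.isUnit
  have hinj : Function.Injective ((SpecialLinearGroup.conjByUnit Q).toMonoidHom.comp
      (SpecialLinearGroup.map E.subtype)) :=
    (SpecialLinearGroup.conjByUnit Q).injective.comp fun a b h =>
      Subtype.ext (map_injective E.subtype_injective (congrArg Subtype.val h))
  exact ⟨((MonoidHom.ofInjective hinj).trans (MulEquiv.subgroupCongr
    (SU₂_eq_range_conjByUnit_comp_map hE hl hQ).symm)).symm⟩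

open Matrix in
theorem stmt_1_general (q : ℕ) (F : Type) [Field F] [Fintype F]
    (hF : Fintype.card F = q ^ 2) (σ : F →+* F) (hσ : ∀ x, σ x = x ^ q) :
    Nonempty ((SU₂ σ) ≃* SpecialLinearGroup (Fin 2) (fixedSubfield q σ hσ)) := by
  obtain ⟨e, he⟩ := FiniteField.exists_pow_succ_eq hF (neg_ne_zero.mpr one_ne_zero)
    (by rw [← hσ, map_neg, map_one])
  obtain ⟨t, ht⟩ := FiniteField.exists_pow_ne_self hF
  refine nonempty_SU₂_mulEquiv_SL (e := e) (t := t) (fun x => by rw [hσ]; rfl) ?_ ?_ ?_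
  · rw [hσ, ← pow_succ, he]
  · rw [hσ, hσ, ← pow_mul, ← sq, ← hF, FiniteField.pow_card]
  · rwa [hσ]

open Matrix in
/-- Let `q` be a prime power, `F` a finite field with `q²` elements, `σ : x ↦ x^q` the field
involution and `E = {x ∈ F : x^q = x}` its fixed subfield. Then `SU₂(F,σ)` is isomorphic
as an abstract group to `SL₂(E)`. -/
theorem stmt_1 (q : ℕ) (hq : IsPrimePow q) (F : Type) [Field F] [Fintype F]
    (hF : Fintype.card F = q ^ 2) (σ : F →+* F) (hσ : ∀ x, σ x = x ^ q) :
    Nonempty ((SU₂ σ) ≃* SpecialLinearGroup (Fin 2) (fixedSubfield q σ hσ)) :=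
  stmt_1_general q F hF σ hσ
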